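/- arXiv:2502.12810 — 2 statements merged into one kernel-verified Lean document; each statement's English description precedes it below -/
import Mathlib

section
/- (Complex orthogonal Procrustes problem.) Let A, B ∈ ℂ^{n×m}, set M = B·Aᴴ ∈ ℂ^{n×n}, and suppose M = U·Σ·Vᴴ where U, V ∈ ℂ^{n×n} are unitary and Σ is a diagonal matrix with nonnegative real diagonal entries. Then the unitary matrix Ω₀ = U·Vᴴ solves the Procrustes problem: for every unitary matrix Ω ∈ ℂ^{n×n}, ‖Ω₀·A − B‖_F ≤ ‖Ω·A − B‖_F. -/
/-- Frobenius norm of a complex matrix: `√(∑ i j, ‖X i j‖²)`. -/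
noncomputable def frobNorm {n m : ℕ} (X : Matrix (Fin n) (Fin m) ℂ) : ℝ :=
  Real.sqrt (∑ i : Fin n, ∑ j : Fin m, ‖X i j‖ ^ 2)

/-!
Since `Ω` is unitary, `‖ΩA - B‖_F² = ‖A‖_F² + ‖B‖_F² - 2 Re tr(B Aᴴ Ωᴴ)`, so it suffices to
maximise `Re tr(M Ωᴴ)` with `M = U Σ Vᴴ`. By cyclicity this is `Re tr(Σ W)` for the unitary
`W = Vᴴ Ωᴴ U`; the diagonal entries of a unitary matrix have modulus at most `1`, so with `Σ ≥ 0`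
it is at most `tr Σ`, which is attained at `W = 1`, i.e. at `Ω = U Vᴴ`.
-/

namespace Matrix

variable {𝕜 m n : Type*} [RCLike 𝕜] [Fintype m] [Fintype n]

lemma sum_norm_sq_eq_re_trace_conjTranspose_mul_self (X : Matrix m n 𝕜) :
    ∑ i, ∑ j, ‖X i j‖ ^ 2 = RCLike.re (Xᴴ * X).trace := by
  simp only [trace, diag, mul_apply, conjTranspose_apply, RCLike.star_def, RCLike.conj_mul,
    map_sum, ← RCLike.ofReal_pow, RCLike.ofReal_re]
  exact Finset.sum_comm

variable [DecidableEq n]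

lemma conjTranspose_mem_unitaryGroup {U : Matrix n n 𝕜} (hU : U ∈ unitaryGroup n 𝕜) :
    Uᴴ ∈ unitaryGroup n 𝕜 :=
  Unitary.star_mem hU

lemma re_trace_conjTranspose_mul_self_unitary_mul_sub {Ω : Matrix n n 𝕜}
    (hΩ : Ω ∈ unitaryGroup n 𝕜) (A B : Matrix n m 𝕜) :
    RCLike.re ((Ω * A - B)ᴴ * (Ω * A - B)).trace =
      RCLike.re (Aᴴ * A).trace + RCLike.re (Bᴴ * B).trace
        - 2 * RCLike.re (B * Aᴴ * Ωᴴ).trace := by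
  have hΩΩ : Ωᴴ * Ω = 1 := Unitary.star_mul_self_of_mem hΩ
  have hquad : (Ω * A - B)ᴴ * (Ω * A - B) =
      Aᴴ * A + Bᴴ * B - Aᴴ * Ωᴴ * B - (Aᴴ * Ωᴴ * B)ᴴ := by
    have hAA : Aᴴ * Ωᴴ * (Ω * A) = Aᴴ * A := by
      rw [Matrix.mul_assoc, ← Matrix.mul_assoc Ωᴴ, hΩΩ, Matrix.one_mul]
    simp only [conjTranspose_sub, conjTranspose_mul, conjTranspose_conjTranspose,
      Matrix.sub_mul, Matrix.mul_sub, hAA, Matrix.mul_assoc]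
    abel
  rw [hquad, trace_sub, trace_sub, trace_add, trace_conjTranspose, trace_mul_cycle]
  simp only [map_sub, map_add, RCLike.star_def, RCLike.conj_re]
  ring

lemma re_trace_diagonal_mul_le {W : Matrix n n 𝕜} (hW : W ∈ unitaryGroup n 𝕜)
    {σ : n → ℝ} (hσ : ∀ i, 0 ≤ σ i) :
    RCLike.re (diagonal (fun i => (σ i : 𝕜)) * W).trace ≤
      RCLike.re (diagonal (fun i => (σ i : 𝕜))).trace := by
  simp only [trace, diag, diagonal_mul, diagonal_apply_eq, map_sum, RCLike.re_ofReal_mul,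
    RCLike.ofReal_re]
  exact Finset.sum_le_sum fun i _ => mul_le_of_le_one_right (hσ i) <|
    (RCLike.re_le_norm _).trans (entry_norm_bound_of_unitary hW i i)

lemma re_trace_svd_mul_conjTranspose_le {U V Ω : Matrix n n 𝕜}
    (hU : U ∈ unitaryGroup n 𝕜) (hV : V ∈ unitaryGroup n 𝕜) (hΩ : Ω ∈ unitaryGroup n 𝕜)
    {σ : n → ℝ} (hσ : ∀ i, 0 ≤ σ i) :
    RCLike.re (U * diagonal (fun i => (σ i : 𝕜)) * Vᴴ * Ωᴴ).trace ≤
      RCLike.re (U * diagonal (fun i => (σ i : 𝕜)) * Vᴴ * (U * Vᴴ)ᴴ).trace := by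
  have hcycle (X : Matrix n n 𝕜) : (U * diagonal (fun i => (σ i : 𝕜)) * Vᴴ * X).trace =
      (diagonal (fun i => (σ i : 𝕜)) * (Vᴴ * X * U)).trace := by
    rw [Matrix.mul_assoc, Matrix.mul_assoc, trace_mul_comm, Matrix.mul_assoc, Matrix.mul_assoc]
  have hW : Vᴴ * Ωᴴ * U ∈ unitaryGroup n 𝕜 :=
    mul_mem (mul_mem (conjTranspose_mem_unitaryGroup hV) (conjTranspose_mem_unitaryGroup hΩ)) hU
  have hW₀ : Vᴴ * (U * Vᴴ)ᴴ * U = 1 := by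
    have hUU : Uᴴ * U = 1 := Unitary.star_mul_self_of_mem hU
    have hVV : Vᴴ * V = 1 := Unitary.star_mul_self_of_mem hV
    rw [conjTranspose_mul, conjTranspose_conjTranspose, Matrix.mul_assoc, Matrix.mul_assoc, hUU,
      Matrix.mul_one, hVV]
  rw [hcycle, hcycle, hW₀, Matrix.mul_one]
  exact re_trace_diagonal_mul_le hW hσ

end Matrix

open Matrix

/-- **Complex orthogonal Procrustes problem.**
Let `M = B Aᴴ` with SVD `M = U Σ Vᴴ` (`U, V` unitary, `Σ = diagonal σ`, `σ i ≥ 0`).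
Then `Ω₀ = U Vᴴ` minimizes `‖Ω A − B‖_F` over all unitary `Ω`. -/
theorem complex_orthogonal_procrustes (n m : ℕ)
    (A B : Matrix (Fin n) (Fin m) ℂ)
    (U V : Matrix (Fin n) (Fin n) ℂ) (σ : Fin n → ℝ)
    (hσ : ∀ i, 0 ≤ σ i)
    (hU : U ∈ Matrix.unitaryGroup (Fin n) ℂ)
    (hV : V ∈ Matrix.unitaryGroup (Fin n) ℂ)
    (hM : B * A.conjTranspose =
      U * Matrix.diagonal (fun i => (σ i : ℂ)) * V.conjTranspose) :
    ∀ Ω : Matrix (Fin n) (Fin n) ℂ, Ω ∈ Matrix.unitaryGroup (Fin n) ℂ →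
      frobNorm ((U * V.conjTranspose) * A - B) ≤ frobNorm (Ω * A - B) := by
  intro Ω hΩ
  have hΩ₀ : U * Vᴴ ∈ unitaryGroup (Fin n) ℂ := mul_mem hU (conjTranspose_mem_unitaryGroup hV)
  apply Real.sqrt_le_sqrt
  rw [sum_norm_sq_eq_re_trace_conjTranspose_mul_self,
    sum_norm_sq_eq_re_trace_conjTranspose_mul_self,
    re_trace_conjTranspose_mul_self_unitary_mul_sub hΩ₀,
    re_trace_conjTranspose_mul_self_unitary_mul_sub hΩ, hM]
  exact sub_le_sub_left
    (mul_le_mul_of_nonneg_left (re_trace_svd_mul_conjTranspose_le hU hV hΩ hσ) zero_le_two) _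
end

section
/- (Real orthogonal Procrustes problem.) Let A, B ∈ ℝ^{n×m}, set M = B·Aᵀ ∈ ℝ^{n×n}, and suppose M = U·Σ·Vᵀ where U, V ∈ ℝ^{n×n} are orthogonal matrices and Σ is a diagonal matrix with nonnegative diagonal entries. Then the orthogonal matrix Ω₀ = U·Vᵀ solves the Procrustes problem: for every orthogonal matrix Ω ∈ ℝ^{n×n}, ‖Ω₀·A − B‖_F ≤ ‖Ω·A − B‖_F. -/
/-!
For orthogonal `Ω` the identity `‖ΩA‖_F = ‖A‖_F` turns the objective into
`‖A‖_F² + ‖B‖_F² - 2 tr(Ω Mᵀ)`, so it suffices to maximise `tr(Ω Mᵀ)`. Writing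
`Mᵀ = V Σ Uᵀ`, this trace is `tr(Z Σ) = ∑ Zᵢᵢ σᵢ` with `Z = Uᵀ Ω V` orthogonal. Entries of an
orthogonal matrix are at most `1` and `σ ≥ 0`, so `tr(Z Σ) ≤ ∑ σᵢ`, with equality for `Z = 1`,
i.e. for `Ω = U Vᵀ`.
-/

/-- Frobenius norm of a real matrix: `√(∑ i j, (X i j)²)`. -/
noncomputable def frobNormReal {n m : ℕ} (X : Matrix (Fin n) (Fin m) ℝ) : ℝ :=
  Real.sqrt (∑ i : Fin n, ∑ j : Fin m, (X i j) ^ 2)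

open Matrix

section Trace

variable {ι κ R : Type*} [Fintype ι] [Fintype κ] [DecidableEq ι] [CommRing R]

theorem trace_sub_mul_transpose_of_mem_orthogonalGroup {Ω : Matrix ι ι R}
    (hΩ : Ω ∈ orthogonalGroup ι R) (A B : Matrix ι κ R) :
    trace ((Ω * A - B) * (Ω * A - B)ᵀ) =
      trace (A * Aᵀ) + trace (B * Bᵀ) - 2 * trace (Ω * (B * Aᵀ)ᵀ) := by
  have hsq : trace (Ω * A * (Ω * A)ᵀ) = trace (A * Aᵀ) := by
    rw [transpose_mul, ← Matrix.mul_assoc, trace_mul_cycle, ← Matrix.mul_assoc,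
      (mem_orthogonalGroup_iff' ι R).mp hΩ, Matrix.one_mul]
  have hcross : trace (Ω * A * Bᵀ) = trace (Ω * (B * Aᵀ)ᵀ) := by
    rw [transpose_mul, transpose_transpose, Matrix.mul_assoc]
  have hcross' : trace (B * (Ω * A)ᵀ) = trace (Ω * (B * Aᵀ)ᵀ) := by
    rw [← trace_transpose, transpose_mul, transpose_transpose, hcross]
  simp only [transpose_sub, Matrix.sub_mul, Matrix.mul_sub, trace_sub]
  rw [hsq, hcross, hcross']
  ring

end Trace

section Orthogonal

variable {ι : Type*} [Fintype ι] [DecidableEq ι]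

theorem diag_le_one_of_mem_orthogonalGroup {Z : Matrix ι ι ℝ} (hZ : Z ∈ orthogonalGroup ι ℝ)
    (i : ι) : Z i i ≤ 1 :=
  (le_abs_self _).trans (entry_norm_bound_of_unitary hZ i i)

theorem trace_mul_diagonal_le_of_mem_orthogonalGroup {Z : Matrix ι ι ℝ}
    (hZ : Z ∈ orthogonalGroup ι ℝ) {σ : ι → ℝ} (hσ : ∀ i, 0 ≤ σ i) :
    trace (Z * diagonal σ) ≤ trace (diagonal σ) := by
  simp only [trace, diag, mul_diagonal, diagonal_apply_eq]
  exact Finset.sum_le_sum fun i _ =>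
    mul_le_of_le_one_left (hσ i) (diag_le_one_of_mem_orthogonalGroup hZ i)

theorem trace_mul_transpose_le_of_svd {U V Ω M : Matrix ι ι ℝ} {σ : ι → ℝ}
    (hσ : ∀ i, 0 ≤ σ i) (hU : U ∈ orthogonalGroup ι ℝ) (hV : V ∈ orthogonalGroup ι ℝ)
    (hΩ : Ω ∈ orthogonalGroup ι ℝ) (hM : M = U * diagonal σ * Vᵀ) :
    trace (Ω * Mᵀ) ≤ trace (U * Vᵀ * Mᵀ) := by
  have hMt : Mᵀ = V * diagonal σ * Uᵀ := by
    rw [hM, transpose_mul, transpose_mul, transpose_transpose, diagonal_transpose,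
      Matrix.mul_assoc]
  have hZ : Uᵀ * Ω * V ∈ orthogonalGroup ι ℝ :=
    mul_mem (mul_mem (transpose_mem_unitaryGroup_iff.mpr hU) hΩ) hV
  have hlhs : trace (Ω * Mᵀ) = trace (Uᵀ * Ω * V * diagonal σ) := by
    rw [hMt, ← Matrix.mul_assoc, ← Matrix.mul_assoc, trace_mul_comm]
    simp only [Matrix.mul_assoc]
  have hrhs : trace (U * Vᵀ * Mᵀ) = trace (diagonal σ) := by
    rw [hMt, Matrix.mul_assoc U, ← Matrix.mul_assoc Vᵀ, ← Matrix.mul_assoc Vᵀ,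
      (mem_orthogonalGroup_iff' ι ℝ).mp hV, Matrix.one_mul, ← Matrix.mul_assoc, trace_mul_comm,
      ← Matrix.mul_assoc, (mem_orthogonalGroup_iff' ι ℝ).mp hU, Matrix.one_mul]
  rw [hlhs, hrhs]
  exact trace_mul_diagonal_le_of_mem_orthogonalGroup hZ hσ

end Orthogonal

theorem frobNormReal_eq_sqrt_trace {n m : ℕ} (X : Matrix (Fin n) (Fin m) ℝ) :
    frobNormReal X = √(trace (X * Xᵀ)) := by
  rw [frobNormReal]
  simp only [trace, diag, mul_apply, transpose_apply, sq]

/-- **Real orthogonal Procrustes problem.**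
Let `M = B Aᵀ` with SVD `M = U Σ Vᵀ` (`U, V` orthogonal, `Σ = diagonal σ`, `σ i ≥ 0`).
Then `Ω₀ = U Vᵀ` minimizes `‖Ω A − B‖_F` over all orthogonal `Ω`. -/
theorem real_orthogonal_procrustes (n m : ℕ)
    (A B : Matrix (Fin n) (Fin m) ℝ)
    (U V : Matrix (Fin n) (Fin n) ℝ) (σ : Fin n → ℝ)
    (hσ : ∀ i, 0 ≤ σ i)
    (hU : U ∈ Matrix.orthogonalGroup (Fin n) ℝ)
    (hV : V ∈ Matrix.orthogonalGroup (Fin n) ℝ)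
    (hM : B * A.transpose = U * Matrix.diagonal σ * V.transpose) :
    ∀ Ω : Matrix (Fin n) (Fin n) ℝ, Ω ∈ Matrix.orthogonalGroup (Fin n) ℝ →
      frobNormReal ((U * V.transpose) * A - B) ≤ frobNormReal (Ω * A - B) := by
  intro Ω hΩ
  have hΩ₀ : U * Vᵀ ∈ orthogonalGroup (Fin n) ℝ :=
    mul_mem hU (transpose_mem_unitaryGroup_iff.mpr hV)
  rw [frobNormReal_eq_sqrt_trace, frobNormReal_eq_sqrt_trace,
    trace_sub_mul_transpose_of_mem_orthogonalGroup hΩ₀,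
    trace_sub_mul_transpose_of_mem_orthogonalGroup hΩ]
  apply Real.sqrt_le_sqrt
  linarith [trace_mul_transpose_le_of_svd hσ hU hV hΩ hM]
end
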